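/- arXiv:2404.18344 — 6 statements merged into one kernel-verified Lean document; each statement's English description precedes it below -/
import Mathlib

section
/- If θ is an ℝ-linear endomorphism of Γ(TM) such that (d_KV θ)(X,Y) = (d_KV θ)(Y,X) for all vector fields X, Y, then θ is a derivation of the Lie algebra of vector fields: θ([X,Y]) = [θ(X),Y] + [X,θ(Y)]. -/
set_option linter.unusedVariables false

/-- KV differential of a 1-cochain: `(d_KV θ)(X,Y) = -∇_X θ(Y) + θ(∇_X Y) - ∇_{θ(X)} Y`. -/
def dKV1 {V : Type*} [AddCommGroup V] (nabla : V → V → V) (θ : V → V) (X Y : V) : V :=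
  -(nabla X (θ Y)) + θ (nabla X Y) - nabla (θ X) Y

/-- if `θ` is an ℝ-linear endomorphism of the vector fields with symmetric
KV differential, then `θ` is a derivation of the Lie algebra of vector fields. -/
theorem stmt_3
    (R : Type*) [CommRing R] [Algebra ℝ R]
    (nabla : Derivation ℝ R R → Derivation ℝ R R → Derivation ℝ R R)
    (h_nabla_addl : ∀ X X' Y, nabla (X + X') Y = nabla X Y + nabla X' Y)
    (h_nabla_smull : ∀ (a : R) X Y, nabla (a • X) Y = a • nabla X Y)
    (h_nabla_addr : ∀ X Y Y', nabla X (Y + Y') = nabla X Y + nabla X Y')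
    (h_nabla_leib : ∀ (a : R) X Y, nabla X (a • Y) = X a • Y + a • nabla X Y)
    (h_nabla_tf : ∀ X Y, nabla X Y - nabla Y X = ⁅X, Y⁆)
    (h_nabla_flat : ∀ X Y Z, nabla X (nabla Y Z) - nabla Y (nabla X Z) = nabla ⁅X, Y⁆ Z)
    (θ : Derivation ℝ R R →ₗ[ℝ] Derivation ℝ R R)
    (hsym : ∀ X Y, dKV1 nabla (fun W => θ W) X Y = dKV1 nabla (fun W => θ W) Y X) :
    ∀ X Y, θ ⁅X, Y⁆ = ⁅θ X, Y⁆ + ⁅X, θ Y⁆ := by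
  intro X Y
  have h := hsym X Y
  simp only [dKV1] at h
  calc θ ⁅X, Y⁆ = θ (nabla X Y - nabla Y X) := by rw [h_nabla_tf]
    _ = θ (nabla X Y) - θ (nabla Y X) := map_sub θ _ _
    _ = (nabla X (θ Y) - nabla (θ Y) X) + (nabla (θ X) Y - nabla Y (θ X)) := by
        have := h; abel_nf at this ⊢; linear_combination (norm := abel) this
    _ = ⁅θ X, Y⁆ + ⁅X, θ Y⁆ := by rw [h_nabla_tf, h_nabla_tf]; abel
end

section
/- Suppose dim M ≥ 3, ω is a 1-form, and θ(X,Y) = ω(X)Y + ω(Y)X (the deformation tensor of a projective transformation of ∇). Then d_KV θ = 0 if and only if ∇ω = 0. -/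
/-!
Since `θ` is symmetric, the torsion term of `d_KV θ` vanishes, and expanding the covariant
derivatives by the Leibniz rule leaves only terms in `∇ω`:
`(d_KV θ)(X,Y,Z) = (∇_Y ω)(X) Z + (∇_Y ω)(Z) X - (∇_X ω)(Y) Z - (∇_X ω)(Z) Y`.
This gives `∇ω = 0 → d_KV θ = 0` at once. Conversely, for basis fields `X = bᵢ`, `Z = bⱼ` and
`Y = bₖ` with `k ∉ {i, j}` (possible as the dimension is at least `3`), the `bₖ`-coefficient of
the right-hand side is `-(∇_{bᵢ} ω)(bⱼ)`; so the tensor `∇ω` vanishes on a basis, hence everywhere.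
-/

/-- KV differential of a 2-cochain:
`(d_KV θ)(X,Y,Z) = (∇_Y θ)(X,Z) - (∇_X θ)(Y,Z) + ∇_{θ(X,Y)-θ(Y,X)} Z`. -/
def dKV2 {V : Type*} [AddCommGroup V] (nabla : V → V → V) (θ : V → V → V) (X Y Z : V) : V :=
  (nabla Y (θ X Z) - θ (nabla Y X) Z - θ X (nabla Y Z))
    - (nabla X (θ Y Z) - θ (nabla X Y) Z - θ Y (nabla X Z))
    + nabla (θ X Y - θ Y X) Z

namespace ProjectiveDeformation

variable {k R : Type*} [CommRing k] [CommRing R] [Algebra k R]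

/-- `(∇_X ω)(Y)`. -/
def covDerivForm (nabla : Derivation k R R → Derivation k R R → Derivation k R R)
    (ω : Derivation k R R →ₗ[R] R) (X Y : Derivation k R R) : R :=
  X (ω Y) - ω (nabla X Y)

variable {nabla : Derivation k R R → Derivation k R R → Derivation k R R}
  {ω : Derivation k R R →ₗ[R] R}

def covDerivFormBilin
    (h_addl : ∀ X X' Y, nabla (X + X') Y = nabla X Y + nabla X' Y)
    (h_smull : ∀ (a : R) X Y, nabla (a • X) Y = a • nabla X Y)
    (h_addr : ∀ X Y Y', nabla X (Y + Y') = nabla X Y + nabla X Y')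
    (h_leib : ∀ (a : R) X Y, nabla X (a • Y) = X a • Y + a • nabla X Y) :
    Derivation k R R →ₗ[R] Derivation k R R →ₗ[R] R :=
  LinearMap.mk₂ R (covDerivForm nabla ω)
    (fun X X' Y => by simp only [covDerivForm, h_addl, map_add, Derivation.add_apply]; ring)
    (fun a X Y => by
      simp only [covDerivForm, h_smull, map_smul, Derivation.smul_apply, smul_eq_mul]; ring)
    (fun X Y Y' => by simp only [covDerivForm, h_addr, map_add]; ring)
    (fun a X Y => by
      simp only [covDerivForm, h_leib, map_add, map_smul, Derivation.leibniz, smul_eq_mul]; ring)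

theorem dKV2_projective
    (h_smull : ∀ (a : R) X Y, nabla (a • X) Y = a • nabla X Y)
    (h_addr : ∀ X Y Y', nabla X (Y + Y') = nabla X Y + nabla X Y')
    (h_leib : ∀ (a : R) X Y, nabla X (a • Y) = X a • Y + a • nabla X Y) (X Y Z) :
    dKV2 nabla (fun X Y => ω X • Y + ω Y • X) X Y Z =
      covDerivForm nabla ω Y X • Z + covDerivForm nabla ω Y Z • X
        - covDerivForm nabla ω X Y • Z - covDerivForm nabla ω X Z • Y := by
  have h_zero : nabla 0 Z = 0 := by simpa using h_smull 0 Z Z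
  have h_symm : (ω X • Y + ω Y • X) - (ω Y • X + ω X • Y) = 0 := by abel
  rw [dKV2, h_symm, h_zero]
  simp only [covDerivForm, h_addr, h_leib, sub_smul]
  module

theorem covDerivForm_basis_eq_zero_of_dKV2_eq_zero
    (h_smull : ∀ (a : R) X Y, nabla (a • X) Y = a • nabla X Y)
    (h_addr : ∀ X Y Y', nabla X (Y + Y') = nabla X Y + nabla X Y')
    (h_leib : ∀ (a : R) X Y, nabla X (a • Y) = X a • Y + a • nabla X Y)
    (h : ∀ X Y Z, dKV2 nabla (fun X Y => ω X • Y + ω Y • X) X Y Z = 0)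
    {n : ℕ} (hn : 3 ≤ n) (b : Module.Basis (Fin n) R (Derivation k R R)) (i j : Fin n) :
    covDerivForm nabla ω (b i) (b j) = 0 := by
  obtain ⟨l, hli, hlj⟩ := Fin.exists_ne_and_ne_of_two_lt i j hn
  have h_coord := congrArg (b.coord l) (h (b i) (b l) (b j))
  rw [dKV2_projective h_smull h_addr h_leib] at h_coord
  simpa [Module.Basis.coord_apply, Finsupp.single_apply, hli, hlj, hli.symm, hlj.symm]
    using h_coord

end ProjectiveDeformation

open ProjectiveDeformation in
theorem stmt_8_general
    (R : Type*) [CommRing R] [Algebra ℝ R]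
    (nabla : Derivation ℝ R R → Derivation ℝ R R → Derivation ℝ R R)
    (h_nabla_addl : ∀ X X' Y, nabla (X + X') Y = nabla X Y + nabla X' Y)
    (h_nabla_smull : ∀ (a : R) X Y, nabla (a • X) Y = a • nabla X Y)
    (h_nabla_addr : ∀ X Y Y', nabla X (Y + Y') = nabla X Y + nabla X Y')
    (h_nabla_leib : ∀ (a : R) X Y, nabla X (a • Y) = X a • Y + a • nabla X Y)
    (n : ℕ) (hn : 3 ≤ n) (b : Module.Basis (Fin n) R (Derivation ℝ R R))
    (ω : Derivation ℝ R R →ₗ[R] R)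
    (θ : Derivation ℝ R R → Derivation ℝ R R → Derivation ℝ R R)
    (hθ : ∀ X Y, θ X Y = ω X • Y + ω Y • X) :
    (∀ X Y Z, dKV2 nabla θ X Y Z = 0) ↔ (∀ X Y, X (ω Y) - ω (nabla X Y) = 0) := by
  obtain rfl : θ = fun X Y => ω X • Y + ω Y • X := funext₂ hθ
  constructor
  · intro h X Y
    have h_bilin : covDerivFormBilin h_nabla_addl h_nabla_smull h_nabla_addr h_nabla_leib = 0 :=
      b.ext fun i => b.ext fun j =>
        covDerivForm_basis_eq_zero_of_dKV2_eq_zero h_nabla_smull h_nabla_addr h_nabla_leib h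
          hn b i j
    exact LinearMap.congr_fun₂ h_bilin X Y
  · intro h X Y Z
    rw [dKV2_projective h_nabla_smull h_nabla_addr h_nabla_leib]
    simp [covDerivForm, h]

/-- if `dim M ≥ 3`, `ω` a 1-form and `θ(X,Y) = ω(X)Y + ω(Y)X`, then
`d_KV θ = 0` iff `∇ω = 0`. -/
theorem stmt_8
    (R : Type*) [CommRing R] [Algebra ℝ R]
    (nabla : Derivation ℝ R R → Derivation ℝ R R → Derivation ℝ R R)
    (h_nabla_addl : ∀ X X' Y, nabla (X + X') Y = nabla X Y + nabla X' Y)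
    (h_nabla_smull : ∀ (a : R) X Y, nabla (a • X) Y = a • nabla X Y)
    (h_nabla_addr : ∀ X Y Y', nabla X (Y + Y') = nabla X Y + nabla X Y')
    (h_nabla_leib : ∀ (a : R) X Y, nabla X (a • Y) = X a • Y + a • nabla X Y)
    (h_nabla_tf : ∀ X Y, nabla X Y - nabla Y X = ⁅X, Y⁆)
    (h_nabla_flat : ∀ X Y Z, nabla X (nabla Y Z) - nabla Y (nabla X Z) = nabla ⁅X, Y⁆ Z)
    (n : ℕ) (hn : 3 ≤ n) (b : Module.Basis (Fin n) R (Derivation ℝ R R))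
    (ω : Derivation ℝ R R →ₗ[R] R)
    (θ : Derivation ℝ R R → Derivation ℝ R R → Derivation ℝ R R)
    (hθ : ∀ X Y, θ X Y = ω X • Y + ω Y • X) :
    (∀ X Y Z, dKV2 nabla θ X Y Z = 0) ↔ (∀ X Y, X (ω Y) - ω (nabla X Y) = 0) :=
  stmt_8_general R nabla h_nabla_addl h_nabla_smull h_nabla_addr h_nabla_leib n hn b ω θ hθ
end

section
/- If ∇ is flat and torsion-free and ∇* is its conjugate connection with respect to a metric g Codazzi-coupled with ∇, and D = ½(∇+∇*) is the Levi-Civita connection of g with curvature R, then writing θ = ∇* - ∇ one has θ(Y,θ(X,Z)) - θ(X,θ(Y,Z)) = 4 R(X,Y)Z. -/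
set_option linter.unusedVariables false

/-- with `θ = ∇* - ∇` for the conjugate connection of a metric `g`
Codazzi-coupled with `∇`, and `D = ½(∇+∇*)` the Levi-Civita connection with curvature
`R`, one has `θ(Y,θ(X,Z)) - θ(X,θ(Y,Z)) = 4 R(X,Y)Z`. -/
theorem stmt_13
    (R : Type*) [CommRing R] [Algebra ℝ R]
    (nabla : Derivation ℝ R R → Derivation ℝ R R → Derivation ℝ R R)
    (h_nabla_addl : ∀ X X' Y, nabla (X + X') Y = nabla X Y + nabla X' Y)
    (h_nabla_smull : ∀ (a : R) X Y, nabla (a • X) Y = a • nabla X Y)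
    (h_nabla_addr : ∀ X Y Y', nabla X (Y + Y') = nabla X Y + nabla X Y')
    (h_nabla_leib : ∀ (a : R) X Y, nabla X (a • Y) = X a • Y + a • nabla X Y)
    (h_nabla_tf : ∀ X Y, nabla X Y - nabla Y X = ⁅X, Y⁆)
    (h_nabla_flat : ∀ X Y Z, nabla X (nabla Y Z) - nabla Y (nabla X Z) = nabla ⁅X, Y⁆ Z)
    (g : Derivation ℝ R R →ₗ[R] Derivation ℝ R R →ₗ[R] R)
    (g_symm : ∀ X Y, g X Y = g Y X)
    (g_nondeg : ∀ X, (∀ Y, g X Y = 0) → X = 0)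
    (g_codazzi : ∀ X Y Z, X (g Y Z) - g (nabla X Y) Z - g Y (nabla X Z)
      = Y (g X Z) - g (nabla Y X) Z - g X (nabla Y Z))
    (nablaStar : Derivation ℝ R R → Derivation ℝ R R → Derivation ℝ R R)
    (h_conj : ∀ X Y Z, X (g Y Z) = g (nabla X Y) Z + g Y (nablaStar X Z))
    (D : Derivation ℝ R R → Derivation ℝ R R → Derivation ℝ R R)
    (hD : ∀ X Y, D X Y = ((2 : ℝ)⁻¹) • (nabla X Y + nablaStar X Y))
    (θ : Derivation ℝ R R → Derivation ℝ R R → Derivation ℝ R R)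
    (hθ : ∀ X Y, θ X Y = nablaStar X Y - nabla X Y) :
    ∀ X Y Z, θ Y (θ X Z) - θ X (θ Y Z)
      = (4 : ℝ) • (D X (D Y Z) - D Y (D X Z) - D ⁅X, Y⁆ Z) := by

  intro X Y Z
  have key : ∀ W V : Derivation ℝ R R, (∀ U, g U W = g U V) → W = V := by
    intro W V h
    have h0 : W - V = 0 := by
      apply g_nondeg
      intro U
      rw [g_symm]
      simp [h U]
    exact sub_eq_zero.mp h0
  have gstar : ∀ X Z U, g U (nablaStar X Z) = X (g U Z) - g (nabla X U) Z := by
    intro X Z U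
    linear_combination -h_conj X U Z
  have g_smul : ∀ (c : ℝ) U W, g U (c • W) = c • g U W := by
    intro c U W
    rw [← algebraMap_smul R c W, map_smul, algebraMap_smul]
  have nabla_smul : ∀ (c : ℝ) X W, nabla X (c • W) = c • nabla X W := by
    intro c X W
    rw [← algebraMap_smul R c W, h_nabla_leib, Derivation.map_algebraMap, zero_smul,
      zero_add, algebraMap_smul]
  have nabla_sub : ∀ X A B, nabla X (A - B) = nabla X A - nabla X B := by
    intro X A B
    have := h_nabla_addr X (A - B) B
    rw [sub_add_cancel] at this
    rw [this]
    abel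
  have hstar_add : ∀ X A B, nablaStar X (A + B) = nablaStar X A + nablaStar X B := by
    intro X A B
    apply key
    intro U
    simp only [map_add, gstar]
    ring
  have hstar_sub : ∀ X A B, nablaStar X (A - B) = nablaStar X A - nablaStar X B := by
    intro X A B
    apply key
    intro U
    simp only [map_sub, gstar]
    ring
  have hstar_smul : ∀ (c : ℝ) X W, nablaStar X (c • W) = c • nablaStar X W := by
    intro c X W
    apply key
    intro U
    simp only [gstar, g_smul, Derivation.map_smul, smul_sub]
  have hstar_flat : ∀ X Y Z, nablaStar X (nablaStar Y Z) - nablaStar Y (nablaStar X Z)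
      = nablaStar ⁅X, Y⁆ Z := by
    intro X Y Z
    apply key
    intro U
    have e1 : g U (nablaStar X (nablaStar Y Z))
        = X (Y (g U Z)) - X (g (nabla Y U) Z) - Y (g (nabla X U) Z)
          + g (nabla Y (nabla X U)) Z := by
      rw [gstar, gstar, map_sub, gstar]
      ring
    have e2 : g U (nablaStar Y (nablaStar X Z))
        = Y (X (g U Z)) - Y (g (nabla X U) Z) - X (g (nabla Y U) Z)
          + g (nabla X (nabla Y U)) Z := by
      rw [gstar, gstar, map_sub, gstar]
      ring
    have e3 : g U (nablaStar ⁅X, Y⁆ Z) = ⁅X, Y⁆ (g U Z) - g (nabla ⁅X, Y⁆ U) Z := gstar _ _ _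
    have e4 : nabla X (nabla Y U) - nabla Y (nabla X U) = nabla ⁅X, Y⁆ U := h_nabla_flat X Y U
    have e5 : g (nabla X (nabla Y U)) Z - g (nabla Y (nabla X U)) Z = g (nabla ⁅X, Y⁆ U) Z := by
      simpa using congrArg (fun W => g W Z) e4
    rw [map_sub, e1, e2, e3, Derivation.commutator_apply]
    linear_combination -e5
  have nf := h_nabla_flat X Y Z
  have sf := hstar_flat X Y Z
  rw [hθ, hθ, hθ, hθ, hD, hD, hD, hD, hD,
    hstar_sub, nabla_sub, hstar_sub, nabla_sub,
    hstar_smul, nabla_smul, hstar_smul, nabla_smul,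
    hstar_add, h_nabla_addr, hstar_add, h_nabla_addr]
  linear_combination (norm := module) (-2 : ℝ) • nf + (-2 : ℝ) • sf
end

section
/- Let (M,g) be a 2-dimensional flat Riemannian manifold with Levi-Civita connection ∇, f ∈ C^∞(M), and θ(X,Y) = -g(X,Y) grad f + (Xf)Y + (Yf)X (the conformal deformation tensor for e^{2f}g). Then d_KV θ = 0 if and only if Δf = 0, where Δ is the Laplace–Beltrami operator of (M,g). -/
set_option linter.unusedVariables false

set_option maxHeartbeats 1000000 in
/-- on a 2-dimensional flat Riemannian manifold with Levi-Civita
connection `∇` and conformal deformation tensor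
`θ(X,Y) = -g(X,Y) grad f + (Xf)Y + (Yf)X`, one has `d_KV θ = 0` iff `Δf = 0`.
Two-dimensionality is expressed by a global `g`-orthonormal frame `e₁, e₂`, and
`Δf = (∇ df)(e₁,e₁) + (∇ df)(e₂,e₂)` is the Laplace–Beltrami operator applied to `f`. -/
theorem stmt_15
    (R : Type*) [CommRing R] [Algebra ℝ R]
    (nabla : Derivation ℝ R R → Derivation ℝ R R → Derivation ℝ R R)
    (h_nabla_addl : ∀ X X' Y, nabla (X + X') Y = nabla X Y + nabla X' Y)
    (h_nabla_smull : ∀ (a : R) X Y, nabla (a • X) Y = a • nabla X Y)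
    (h_nabla_addr : ∀ X Y Y', nabla X (Y + Y') = nabla X Y + nabla X Y')
    (h_nabla_leib : ∀ (a : R) X Y, nabla X (a • Y) = X a • Y + a • nabla X Y)
    (h_nabla_tf : ∀ X Y, nabla X Y - nabla Y X = ⁅X, Y⁆)
    (h_nabla_flat : ∀ X Y Z, nabla X (nabla Y Z) - nabla Y (nabla X Z) = nabla ⁅X, Y⁆ Z)
    (g : Derivation ℝ R R →ₗ[R] Derivation ℝ R R →ₗ[R] R)
    (g_symm : ∀ X Y, g X Y = g Y X)
    (g_nondeg : ∀ X, (∀ Y, g X Y = 0) → X = 0)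
    (g_compat : ∀ X Y Z, X (g Y Z) = g (nabla X Y) Z + g Y (nabla X Z))
    (f : R) (gradf : Derivation ℝ R R)
    (h_grad : ∀ X, g gradf X = X f)
    (θ : Derivation ℝ R R → Derivation ℝ R R → Derivation ℝ R R)
    (hθ : ∀ X Y, θ X Y = -(g X Y • gradf) + X f • Y + Y f • X)
    (e₁ e₂ : Derivation ℝ R R)
    (h_on : g e₁ e₁ = 1 ∧ g e₂ e₂ = 1 ∧ g e₁ e₂ = 0)
    (h_frame : ∀ X, X = g X e₁ • e₁ + g X e₂ • e₂) :
    (∀ X Y Z, dKV2 nabla θ X Y Z = 0) ↔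
      (e₁ (e₁ f) - (nabla e₁ e₁) f) + (e₂ (e₂ f) - (nabla e₂ e₂) f) = 0 := by
  obtain ⟨h11, h22, h12⟩ := h_on
  have h21 : g e₂ e₁ = 0 := by rw [g_symm]; exact h12
  have hgl : ∀ (r s : R) (U V W : Derivation ℝ R R),
      g (r • U + s • V) W = r * g U W + s * g V W := by
    intro r s U V W
    simp [smul_eq_mul]
  have hgr : ∀ (r s : R) (U V W : Derivation ℝ R R),
      g W (r • U + s • V) = r * g W U + s * g W V := by
    intro r s U V W
    simp [smul_eq_mul]
  have hnl : ∀ (r s : R) (U V W : Derivation ℝ R R),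
      nabla (r • U + s • V) W = r • nabla U W + s • nabla V W := by
    intro r s U V W
    rw [h_nabla_addl, h_nabla_smull, h_nabla_smull]
  have hzero : ∀ Z, nabla 0 Z = 0 := by
    intro Z
    simpa using h_nabla_smull 0 e₁ Z
  have hθsub : ∀ X Y, θ X Y - θ Y X = 0 := by
    intro X Y
    rw [hθ, hθ, g_symm X Y]
    abel
  have hH : ∀ W Z, g (nabla W gradf) Z = W (Z f) - (nabla W Z) f := by
    intro W Z
    have h2 := g_compat W gradf Z
    rw [h_grad, h_grad] at h2
    linear_combination -h2
  have hsymm : ∀ X Y, X (Y f) - (nabla X Y) f = Y (X f) - (nabla Y X) f := by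
    intro X Y
    have h2 : (nabla X Y - nabla Y X) f = X (Y f) - Y (X f) := by
      rw [h_nabla_tf, Derivation.commutator_apply]
    rw [Derivation.sub_apply] at h2
    linear_combination -h2
  have covθ : ∀ W U V, nabla W (θ U V) - θ (nabla W U) V - θ U (nabla W V)
      = -(g U V • nabla W gradf) + (W (U f) - (nabla W U) f) • V
        + (W (V f) - (nabla W V) f) • U := by
    intro W U V
    rw [hθ U V, hθ (nabla W U) V, hθ U (nabla W V)]
    rw [show -(g U V • gradf) + U f • V + V f • U
        = (-(g U V)) • gradf + U f • V + V f • U by rw [neg_smul]]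
    rw [h_nabla_addr, h_nabla_addr, h_nabla_leib, h_nabla_leib, h_nabla_leib]
    rw [Derivation.map_neg, g_compat W U V]
    match_scalars <;> ring
  have key : ∀ X Y Z, dKV2 nabla θ X Y Z
      = g Y Z • nabla X gradf - g X Z • nabla Y gradf
        + g (nabla Y gradf) Z • X - g (nabla X gradf) Z • Y := by
    intro X Y Z
    unfold dKV2
    rw [hθsub X Y, hzero Z, covθ Y X Z, covθ X Y Z, hH Y Z, hH X Z, hsymm X Y]
    module
  constructor
  · intro h
    have h0 := h e₁ e₂ e₁
    rw [key] at h0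
    have h1 := congrArg (fun W => g W e₂) h0
    simp only [map_sub, map_add, map_smul, LinearMap.sub_apply, LinearMap.add_apply,
      LinearMap.smul_apply, smul_eq_mul, map_zero, LinearMap.zero_apply,
      h11, h22, h12, h21, mul_one, mul_zero, one_mul, zero_mul] at h1
    rw [← hH e₁ e₁, ← hH e₂ e₂]
    linear_combination -h1
  · intro hΔ X Y Z
    have hΔ' : g (nabla e₁ gradf) e₁ + g (nabla e₂ gradf) e₂ = 0 := by
      rw [hH e₁ e₁, hH e₂ e₂]
      linear_combination hΔ
    rw [key]
    have hX := h_frame X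
    have hY := h_frame Y
    have hZ := h_frame Z
    set x1 := g X e₁ with hx1
    set x2 := g X e₂ with hx2
    set y1 := g Y e₁ with hy1
    set y2 := g Y e₂ with hy2
    set z1 := g Z e₁ with hz1
    set z2 := g Z e₂ with hz2
    rw [hX, hY, hZ]
    simp only [hnl, hgl, hgr, h11, h22, h12, h21, mul_one, mul_zero, one_mul,
      zero_mul, add_zero, zero_add]
    rw [h_frame (nabla e₁ gradf), h_frame (nabla e₂ gradf)]
    simp only [hgl, h11, h22, h12, h21, mul_one, mul_zero, one_mul, zero_mul,
      add_zero, zero_add]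
    match_scalars <;>
      first
      | linear_combination ((x1 * y2 - x2 * y1) * z2) * hΔ'
      | linear_combination (-((x1 * y2 - x2 * y1) * z1)) * hΔ'
end

section
/- With the conformal deformation tensor θ(X,Y) = -g(X,Y) grad f + (Xf)Y + (Yf)X on a flat Riemannian manifold (M,g) with Levi-Civita connection ∇, for any local orthonormal frame e₁, e₂ on a 2-dimensional M and i ≠ j: g((d_KV θ)(e_i, e_j, e_i), e_j) = -Δf and g((d_KV θ)(e_i, e_j, e_j), e_i) = Δf. -/
set_option linter.unusedVariables false

/-- with the conformal deformation tensor `θ` on a 2-dimensional flat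
Riemannian manifold, for any orthonormal frame `e : Fin 2 → Γ(TM)` and `i ≠ j`:
`g((d_KV θ)(e i, e j, e i), e j) = -Δf` and `g((d_KV θ)(e i, e j, e j), e i) = Δf`. -/
theorem stmt_16
    (R : Type*) [CommRing R] [Algebra ℝ R]
    (nabla : Derivation ℝ R R → Derivation ℝ R R → Derivation ℝ R R)
    (h_nabla_addl : ∀ X X' Y, nabla (X + X') Y = nabla X Y + nabla X' Y)
    (h_nabla_smull : ∀ (a : R) X Y, nabla (a • X) Y = a • nabla X Y)
    (h_nabla_addr : ∀ X Y Y', nabla X (Y + Y') = nabla X Y + nabla X Y')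
    (h_nabla_leib : ∀ (a : R) X Y, nabla X (a • Y) = X a • Y + a • nabla X Y)
    (h_nabla_tf : ∀ X Y, nabla X Y - nabla Y X = ⁅X, Y⁆)
    (h_nabla_flat : ∀ X Y Z, nabla X (nabla Y Z) - nabla Y (nabla X Z) = nabla ⁅X, Y⁆ Z)
    (g : Derivation ℝ R R →ₗ[R] Derivation ℝ R R →ₗ[R] R)
    (g_symm : ∀ X Y, g X Y = g Y X)
    (g_nondeg : ∀ X, (∀ Y, g X Y = 0) → X = 0)
    (g_compat : ∀ X Y Z, X (g Y Z) = g (nabla X Y) Z + g Y (nabla X Z))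
    (f : R) (gradf : Derivation ℝ R R)
    (h_grad : ∀ X, g gradf X = X f)
    (θ : Derivation ℝ R R → Derivation ℝ R R → Derivation ℝ R R)
    (hθ : ∀ X Y, θ X Y = -(g X Y • gradf) + X f • Y + Y f • X)
    (e : Fin 2 → Derivation ℝ R R)
    (h_on : ∀ i j, g (e i) (e j) = if i = j then 1 else 0)
    (h_frame : ∀ X, X = ∑ i, g X (e i) • e i)
    (Δf : R)
    (hΔ : Δf = ∑ i, ((e i) ((e i) f) - (nabla (e i) (e i)) f)) :
    ∀ i j, i ≠ j →
      g (dKV2 nabla θ (e i) (e j) (e i)) (e j) = -Δf ∧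
      g (dKV2 nabla θ (e i) (e j) (e j)) (e i) = Δf := by

  intro i j hij
  have hzero : ∀ Z, nabla 0 Z = 0 := by
    intro Z
    have h := h_nabla_addl 0 0 Z
    rw [add_zero] at h
    have h' : nabla 0 Z + 0 = nabla 0 Z + nabla 0 Z := by rw [add_zero]; exact h
    exact (add_left_cancel h').symm
  have key : ∀ X Y Z, nabla X (θ Y Z) - θ (nabla X Y) Z - θ Y (nabla X Z)
      = -(g Y Z • nabla X gradf) + (X (Y f) - (nabla X Y) f) • Z
        + (X (Z f) - (nabla X Z) f) • Y := by
    intro X Y Z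
    rw [hθ Y Z, hθ (nabla X Y) Z, hθ Y (nabla X Z)]
    rw [show -(g Y Z • gradf) + Y f • Z + Z f • Y
        = (-(g Y Z)) • gradf + (Y f • Z + Z f • Y) by module]
    rw [h_nabla_addr, h_nabla_addr, h_nabla_leib, h_nabla_leib, h_nabla_leib]
    have hXneg : X (-(g Y Z)) = -(g (nabla X Y) Z + g Y (nabla X Z)) := by
      rw [map_neg, g_compat X Y Z]
    rw [hXneg]
    module
  have hgrad2 : ∀ X Y, g (nabla X gradf) Y = X (Y f) - (nabla X Y) f := by
    intro X Y
    have hc := g_compat X gradf Y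
    rw [h_grad Y, h_grad (nabla X Y)] at hc
    linear_combination -hc
  have hbr : ∀ X Y : Derivation ℝ R R,
      X (Y f) - (nabla X Y) f = Y (X f) - (nabla Y X) f := by
    intro X Y
    have h1 := congrArg (fun D : Derivation ℝ R R => D f) (h_nabla_tf X Y)
    simp only [Derivation.sub_apply, Derivation.commutator_apply] at h1
    linear_combination -h1
  have hθsymm : ∀ X Y, θ X Y = θ Y X := by
    intro X Y
    rw [hθ, hθ, g_symm]
    abel
  have hd : ∀ Z, dKV2 nabla θ (e i) (e j) Z
      = -(g (e i) Z • nabla (e j) gradf) + g (e j) Z • nabla (e i) gradf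
        + ((e j) (Z f) - (nabla (e j) Z) f) • e i
        - ((e i) (Z f) - (nabla (e i) Z) f) • e j := by
    intro Z
    unfold dKV2
    rw [key (e j) (e i) Z, key (e i) (e j) Z, hθsymm (e i) (e j), sub_self, hzero,
      hbr (e j) (e i)]
    module
  have hgij : g (e i) (e j) = 0 := by rw [h_on]; simp [hij]
  have hgji : g (e j) (e i) = 0 := by rw [g_symm]; exact hgij
  have hgi : g (e i) (e i) = 1 := by rw [h_on]; simp
  have hgj : g (e j) (e j) = 1 := by rw [h_on]; simp
  have hsum : Δf = ((e i) ((e i) f) - (nabla (e i) (e i)) f)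
      + ((e j) ((e j) f) - (nabla (e j) (e j)) f) := by
    rw [hΔ, Fin.sum_univ_two]
    have hc : (i = 0 ∧ j = 1) ∨ (i = 1 ∧ j = 0) := by omega
    rcases hc with ⟨hi, hj⟩ | ⟨hi, hj⟩ <;> subst hi <;> subst hj <;> ring
  constructor
  · rw [hd (e i)]
    simp only [map_add, map_sub, map_neg, map_smul, LinearMap.add_apply,
      LinearMap.sub_apply, LinearMap.neg_apply, LinearMap.smul_apply, smul_eq_mul]
    rw [hgrad2, hgrad2, hgij, hgji, hgi, hgj, hsum]
    ring
  · rw [hd (e j)]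
    simp only [map_add, map_sub, map_neg, map_smul, LinearMap.add_apply,
      LinearMap.sub_apply, LinearMap.neg_apply, LinearMap.smul_apply, smul_eq_mul]
    rw [hgrad2, hgrad2, hgij, hgji, hgi, hgj, hsum]
    ring
end

section
/- There is no smooth function u on the punctured plane M = ℝ² \ {0} satisfying -(x²+y²) Hess(u) = [[x, y],[y, -x]], i.e., u_xx = -x/(x²+y²), u_xy = -y/(x²+y²), u_yy = x/(x²+y²) on M. -/
set_option linter.unusedVariables false

/-- there is no smooth function `u` on the punctured plane with
`u_xx = -x/(x²+y²)`, `u_xy = -y/(x²+y²)`, `u_yy = x/(x²+y²)`, i.e. satisfying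
`-(x²+y²) Hess u = [[x, y],[y, -x]]`. -/
theorem stmt_17 :
    ¬ ∃ u : ℝ × ℝ → ℝ,
      ContDiffOn ℝ (⊤ : ℕ∞) u {p : ℝ × ℝ | p ≠ 0} ∧
      ∀ p : ℝ × ℝ, p ≠ 0 →
        fderiv ℝ (fun q => fderiv ℝ u q (1, 0)) p (1, 0) = -p.1 / (p.1 ^ 2 + p.2 ^ 2) ∧
        fderiv ℝ (fun q => fderiv ℝ u q (1, 0)) p (0, 1) = -p.2 / (p.1 ^ 2 + p.2 ^ 2) ∧
        fderiv ℝ (fun q => fderiv ℝ u q (0, 1)) p (0, 1) = p.1 / (p.1 ^ 2 + p.2 ^ 2) := by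
  rintro ⟨u, hu, H⟩
  have hopen : IsOpen {p : ℝ × ℝ | p ≠ 0} := isOpen_compl_singleton
  have hat : ∀ p : ℝ × ℝ, p ≠ 0 → ContDiffAt ℝ (⊤ : ℕ∞) u p := fun p hp =>
    hu.contDiffAt (hopen.mem_nhds hp)
  -- second derivative and its properties
  have key : ∀ p : ℝ × ℝ, p ≠ 0 →
      HasDerivAt (fun t : ℝ => fderiv ℝ u (Real.cos t, Real.sin t) (0, 1)) 1 =
      HasDerivAt (fun t : ℝ => fderiv ℝ u (Real.cos t, Real.sin t) (0, 1)) 1 := fun _ _ => rfl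
  have main : ∀ t : ℝ,
      HasDerivAt (fun s : ℝ => fderiv ℝ u (Real.cos s, Real.sin s) (0, 1)) 1 t := by
    intro t
    set p : ℝ × ℝ := (Real.cos t, Real.sin t) with hpdef
    have hr : p.1 ^ 2 + p.2 ^ 2 = 1 := by
      simp [hpdef, Real.cos_sq_add_sin_sq]
    have hp : p ≠ 0 := by
      intro h
      rw [h] at hr; norm_num at hr
    -- u is C² at p, get HasFDerivAt of fderiv u
    have h1 : ContDiffAt ℝ 1 (fderiv ℝ u) p := (hat p hp).fderiv_right (by exact WithTop.coe_le_coe.mpr le_top)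
    set f'' : ℝ × ℝ →L[ℝ] ℝ × ℝ →L[ℝ] ℝ := fderiv ℝ (fderiv ℝ u) p with hf''
    have hD : HasFDerivAt (fderiv ℝ u) f'' p :=
      h1.differentiableAt one_ne_zero |>.hasFDerivAt
    -- eventual differentiability near p
    have hev : ∀ᶠ q in nhds p, HasFDerivAt u (fderiv ℝ u q) q := by
      filter_upwards [hopen.mem_nhds hp] with q hq
      exact ((hat q hq).differentiableAt (by simp)).hasFDerivAt
    have hsymm : ∀ v w : ℝ × ℝ, f'' v w = f'' w v := fun v w =>
      second_derivative_symmetric_of_eventually hev hD v w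
    -- g_i q w := (fderiv u q) w; HasFDerivAt via clm apply
    have hg : ∀ w : ℝ × ℝ, HasFDerivAt (fun q => fderiv ℝ u q w)
        ((ContinuousLinearMap.apply ℝ ℝ w).comp f'') p := fun w =>
      (ContinuousLinearMap.apply ℝ ℝ w).hasFDerivAt.comp p hD
    -- identify the hypothesis values
    obtain ⟨hxx, hxy, hyy⟩ := H p hp
    have e1 : f'' (0, 1) (1, 0) = -p.2 / (p.1 ^ 2 + p.2 ^ 2) := by
      rw [← hxy, (hg (1, 0)).fderiv]; rfl
    have e2 : f'' (0, 1) (0, 1) = p.1 / (p.1 ^ 2 + p.2 ^ 2) := by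
      rw [← hyy, (hg (0, 1)).fderiv]; rfl
    -- chain rule with the circle
    have hγ : HasDerivAt (fun s : ℝ => ((Real.cos s, Real.sin s) : ℝ × ℝ))
        (-Real.sin t, Real.cos t) t :=
      (Real.hasDerivAt_cos t).prodMk (Real.hasDerivAt_sin t)
    have hcomp : HasDerivAt (fun s : ℝ => fderiv ℝ u (Real.cos s, Real.sin s) (0, 1))
        (((ContinuousLinearMap.apply ℝ ℝ ((0 : ℝ), (1 : ℝ))).comp f'')
          (-Real.sin t, Real.cos t)) t :=
      by have := (hg (0, 1)).comp_hasDerivAt t hγ; exact this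
    have hval : ((ContinuousLinearMap.apply ℝ ℝ ((0 : ℝ), (1 : ℝ))).comp f'')
        (-Real.sin t, Real.cos t) = 1 := by
      have hdecomp : ((-Real.sin t, Real.cos t) : ℝ × ℝ)
          = (-Real.sin t) • ((1, 0) : ℝ × ℝ) + (Real.cos t) • ((0, 1) : ℝ × ℝ) := by
        simp [Prod.ext_iff]
      show f'' (-Real.sin t, Real.cos t) (0, 1) = 1
      rw [hdecomp]
      simp only [map_add, map_smul, ContinuousLinearMap.add_apply,
        ContinuousLinearMap.smul_apply, smul_eq_mul]
      rw [hsymm (1, 0) (0, 1), e1, e2, hr]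
      have hp1 : p.1 = Real.cos t := rfl
      have hp2 : p.2 = Real.sin t := rfl
      rw [hp1, hp2]
      have h := Real.sin_sq_add_cos_sq t
      linear_combination h
    rw [hval] at hcomp
    exact hcomp
  -- v t - t is constant
  set v : ℝ → ℝ := fun s => fderiv ℝ u (Real.cos s, Real.sin s) (0, 1) with hv
  have hw : ∀ t : ℝ, HasDerivAt (fun s => v s - s) 0 t := by
    intro t
    have := (main t).sub (hasDerivAt_id t)
    rw [sub_self] at this
    exact this
  have hconst : ∀ a b : ℝ, v a - a = v b - b := by
    intro a b
    exact is_const_of_deriv_eq_zero (fun x => (hw x).differentiableAt)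
      (fun x => (hw x).deriv) a b
  have hper : v (2 * Real.pi) = v 0 := by
    simp [hv, Real.cos_two_pi, Real.sin_two_pi]
  have := hconst (2 * Real.pi) 0
  rw [hper] at this
  have : (2 : ℝ) * Real.pi = 0 := by linarith
  exact absurd this (by positivity)
end
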